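/- For integers m ≥ 1, n ≥ 0, and k ≥ 0: sum over l from 0 to n of binomial(n,l) · C(l, k; m) = sum over j from 0 to n of 2^(n-j) · binomial(n,j) · C(j, k-j; m-1), where C(j, i; 0) = 1 if i = 0 and 0 otherwise, and terms with negative indices are 0. -/

import Mathlib

open Polynomial Finset

/-!
Write `P = 1 + t + ⋯ + t^m = 1 + t Q` with `Q = 1 + t + ⋯ + t^(m-1)`. The left-hand side is the
coefficient of `t^k` in `(P + 1)^n` and the right-hand side that of `(t Q + 2)^n`, both expanded
by the binomial theorem; the two polynomials agree because `P + 1 = t Q + 2`.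
-/

/-- Polynomial (extended binomial) coefficient: the coefficient of `t^k` in
`(1 + t + ⋯ + t^m)^n`, defined to be `0` for negative `k`. -/
noncomputable def pc (m n : ℕ) (k : ℤ) : ℤ :=
  if 0 ≤ k then
    ((∑ i ∈ Finset.range (m + 1), (Polynomial.X : Polynomial ℤ) ^ i) ^ n).coeff k.toNat
  else 0

theorem Polynomial.coeff_add_C_pow {R : Type*} [CommSemiring R] (p : R[X]) (c : R) (n k : ℕ) :
    ((p + C c) ^ n).coeff k =
      ∑ j ∈ range (n + 1), c ^ (n - j) * (n.choose j : R) * (p ^ j).coeff k := by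
  rw [add_pow, finsetSum_coeff]
  refine sum_congr rfl fun j _ => ?_
  rw [← C_pow, ← C_eq_natCast, mul_assoc, ← C_mul, coeff_mul_C]
  ring

theorem pc_natCast (m n k : ℕ) :
    pc m n k = ((∑ i ∈ range (m + 1), (X : ℤ[X]) ^ i) ^ n).coeff k := by
  simp [pc]

theorem pc_sub_natCast (m j k : ℕ) :
    pc m j ((k : ℤ) - j) = ((X * ∑ i ∈ range (m + 1), (X : ℤ[X]) ^ i) ^ j).coeff k := by
  rw [mul_pow, coeff_X_pow_mul', pc]
  by_cases hjk : j ≤ k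
  · rw [if_pos hjk, if_pos (by omega), show ((k : ℤ) - j).toNat = k - j by omega]
  · rw [if_neg hjk, if_neg (by omega)]

theorem pc_binom_sum (m n k : ℕ) (hm : 1 ≤ m) :
    ∑ l ∈ Finset.range (n + 1), (Nat.choose n l : ℤ) * pc m l k =
      ∑ j ∈ Finset.range (n + 1), 2 ^ (n - j) * (Nat.choose n j : ℤ) * pc (m - 1) j ((k : ℤ) - j) := by
  have hP : ∑ i ∈ range (m + 1), (X : ℤ[X]) ^ i + C 1 =
      X * ∑ i ∈ range (m - 1 + 1), X ^ i + C 2 := by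
    rw [Nat.sub_add_cancel hm, geom_sum_succ, add_assoc, ← C_1, ← C_add]
    norm_num
  calc ∑ l ∈ range (n + 1), (n.choose l : ℤ) * pc m l k
      = ((∑ i ∈ range (m + 1), (X : ℤ[X]) ^ i + C 1) ^ n).coeff k := by
        simp only [coeff_add_C_pow, one_pow, one_mul, pc_natCast]
    _ = (((X : ℤ[X]) * ∑ i ∈ range (m - 1 + 1), X ^ i + C 2) ^ n).coeff k := by rw [hP]
    _ = _ := by simp only [coeff_add_C_pow, pc_sub_natCast]
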